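/- arXiv:1506.07105 — 3 statements merged into one kernel-verified Lean document; each statement's English description precedes it below -/
import Mathlib

section
/- For a nontrivial finite cyclic group G, every maximal subgroup of G has even order if and only if 4 divides |G|. -/
/-! Maximal subgroups of an abelian group are those of prime index `p`, so in a cyclic group of
order `n` they have order `n / p`. If `4 ∣ n`, every `n / p` is even. Conversely, a maximal
subgroup of even order makes `n` even, and then the subgroup of index `2` has even order `n / 2`,
so `4 ∣ n`. -/

namespace Subgroup

variable {G : Type*}

theorem isCoatom_of_index_prime [Group G] {H : Subgroup G} (hH : H.index.Prime) :
    IsCoatom H := by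
  have : H.FiniteIndex := ⟨hH.ne_zero⟩
  refine ⟨fun h ↦ hH.ne_one (by simp [h]), fun K hK ↦ index_eq_one.mp ?_⟩
  exact ((Nat.dvd_prime hH).mp (index_dvd_of_le hK.le)).resolve_right (index_strictAnti hK).ne

/-- By the correspondence theorem, `G ⧸ M` is a commutative simple group. -/
theorem index_prime_of_isCoatom [CommGroup G] {M : Subgroup G} (hM : IsCoatom M) :
    M.index.Prime := by
  have : IsSimpleOrder (Set.Ici M) := Set.isSimpleOrder_Ici_iff_isCoatom.mpr hM
  have : IsSimpleOrder (Subgroup (G ⧸ M)) :=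
    OrderIso.isSimpleOrder (β := Set.Ici M) (QuotientGroup.comapMk'OrderIso M)
  have : Nontrivial (G ⧸ M) := nontrivial_iff.mp inferInstance
  have : IsSimpleGroup (G ⧸ M) := ⟨fun H _ ↦ IsSimpleOrder.eq_bot_or_eq_top H⟩
  rw [index_eq_card]
  exact IsSimpleGroup.prime_card

end Subgroup

theorem IsCyclic.exists_subgroup_index_eq_two {G : Type*} [Group G] [Finite G] [IsCyclic G]
    (h : 2 ∣ Nat.card G) : ∃ H : Subgroup G, H.index = 2 := by
  let := IsCyclic.commGroup (α := G)
  exact ⟨(powMonoidHom 2 : G →* G).range, by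
    rw [IsCyclic.index_powMonoidHom_range, Nat.gcd_eq_right h]⟩

theorem Nat.even_of_four_dvd_mul_prime {m p : ℕ} (hp : p.Prime) (h : 4 ∣ m * p) : Even m := by
  rw [even_iff_two_dvd]
  by_contra hm
  have hp2 : 2 = p := (Nat.prime_dvd_prime_iff_eq Nat.prime_two hp).mp <|
    ((Nat.prime_two.dvd_mul).mp (dvd_trans (by norm_num) h)).resolve_left hm
  subst hp2
  omega

theorem stmt_2 {G : Type*} [Group G] [Finite G] [IsCyclic G] [Nontrivial G] :
    (∀ M : Subgroup G, IsCoatom M → Even (Nat.card M)) ↔ 4 ∣ Nat.card G := by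
  constructor
  · intro hall
    obtain ⟨M, hM⟩ := IsCoatomic.exists_coatom (α := Subgroup G)
    have h2 : 2 ∣ Nat.card G :=
      (even_iff_two_dvd.mp (hall M hM)).trans (Subgroup.card_subgroup_dvd_card M)
    obtain ⟨H, hH⟩ := IsCyclic.exists_subgroup_index_eq_two h2
    obtain ⟨k, hk⟩ := hall H (Subgroup.isCoatom_of_index_prime (hH ▸ Nat.prime_two))
    have hcard := H.card_mul_index
    rw [hH] at hcard
    omega
  · intro h4 M hM
    let := IsCyclic.commGroup (α := G)
    exact Nat.even_of_four_dvd_mul_prime (Subgroup.index_prime_of_isCoatom hM)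
      (M.card_mul_index ▸ h4)
end

section
/- If G is a finite group of even order with minimum number of generators d(G) ≥ 3, then the set of even-order maximal subgroups of G covers G. -/
theorem stmt_7 {G : Type*} [Group G] [Finite G] [Group.FG G]
    (heven : Even (Nat.card G)) (hrank : 3 ≤ Group.rank G) :
    ∀ x : G, ∃ M : Subgroup G, IsCoatom M ∧ Even (Nat.card M) ∧ x ∈ M := by
  classical
  intro x
  obtain ⟨g, hg⟩ := exists_prime_orderOf_dvd_card' (G := G) 2 (even_iff_two_dvd.mp heven)
  set H : Subgroup G := Subgroup.closure {x, g} with hH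
  have hne : H ≠ ⊤ := by
    intro htop
    have hle : Group.rank G ≤ ({x, g} : Finset G).card := by
      apply Group.rank_le
      rw [show (({x, g} : Finset G) : Set G) = ({x, g} : Set G) by simp]
      exact htop
    have h2 : ({x, g} : Finset G).card ≤ 2 :=
      (Finset.card_insert_le _ _).trans (by simp)
    omega
  obtain ⟨M, hM, hHM⟩ :=
    ((Finite.to_isCoatomic (α := Subgroup G)).eq_top_or_exists_le_coatom H).resolve_left hne
  refine ⟨M, hM, ?_, hHM (Subgroup.subset_closure (by simp))⟩
  have hgM : g ∈ M := hHM (Subgroup.subset_closure (by simp))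
  rw [even_iff_two_dvd]
  calc (2 : ℕ) = orderOf (⟨g, hgM⟩ : M) := by rw [Subgroup.orderOf_mk, hg]
    _ ∣ Nat.card M := orderOf_dvd_natCard _
end

section
/- Let G be a finite group such that every element of odd order in G is real, |G| > 2, and G is not isomorphic to Dih(C) for any odd-order cyclic group C. Then every element of G of odd order lies in a proper subgroup of even order. -/
private lemma sq_commute {G : Type*} [Group G] {g t : G} (h : t * g * t⁻¹ = g⁻¹) :
    Commute (t * t) g := by
  have h1 : t * g = g⁻¹ * t := by
    calc t * g = (t * g * t⁻¹) * t := by group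
      _ = g⁻¹ * t := by rw [h]
  have h3 : t * g⁻¹ * t⁻¹ = g := by
    rw [show t * g⁻¹ * t⁻¹ = (t * g * t⁻¹)⁻¹ by group, h, inv_inv]
  have h2 : t * g⁻¹ = g * t := by
    calc t * g⁻¹ = (t * g⁻¹ * t⁻¹) * t := by group
      _ = g * t := by rw [h3]
  show t * t * g = g * (t * t)
  calc t * t * g = t * (t * g) := by group
    _ = t * (g⁻¹ * t) := by rw [h1]
    _ = (t * g⁻¹) * t := by group
    _ = (g * t) * t := by rw [h2]
    _ = g * (t * t) := by group

private lemma conj_odd_pow {G : Type*} [Group G] {g t : G} (h : t * g * t⁻¹ = g⁻¹)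
    {m : ℕ} (hm : Odd m) : t ^ m * g * (t ^ m)⁻¹ = g⁻¹ := by
  obtain ⟨k, hk⟩ := hm
  have hc : Commute ((t * t) ^ k) g⁻¹ := ((sq_commute h).pow_left k).inv_right
  have htm : t ^ m = (t * t) ^ k * t := by
    rw [← sq, ← pow_mul, ← pow_succ, hk]
  rw [htm]
  calc (t * t) ^ k * t * g * ((t * t) ^ k * t)⁻¹
      = (t * t) ^ k * (t * g * t⁻¹) * ((t * t) ^ k)⁻¹ := by group
    _ = (t * t) ^ k * g⁻¹ * ((t * t) ^ k)⁻¹ := by rw [h]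
    _ = g⁻¹ := by rw [hc.eq]; group

private lemma order_one_of_odd_sq {G : Type*} [Group G] {g : G} (hg : Odd (orderOf g))
    (h : g * g = 1) : g = 1 := by
  have hdvd : orderOf g ∣ 2 := orderOf_dvd_of_pow_eq_one (by rwa [sq])
  rw [Nat.dvd_prime Nat.prime_two] at hdvd
  rcases hdvd with h1 | h2
  · exact orderOf_eq_one_iff.mp h1
  · rw [h2] at hg; simp [Nat.odd_iff] at hg

private lemma real_odd_odd {G : Type*} [Group G] {g t : G} (h : t * g * t⁻¹ = g⁻¹)
    (hg : Odd (orderOf g)) (ht : Odd (orderOf t)) : g = 1 := by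
  have h2 : t ^ orderOf t * g * (t ^ orderOf t)⁻¹ = g⁻¹ := conj_odd_pow h ht
  rw [pow_orderOf_eq_one, one_mul, inv_one, mul_one] at h2
  exact order_one_of_odd_sq hg (mul_eq_one_iff_eq_inv.mpr h2)

private lemma even_card_of_mem {G : Type*} [Group G] {H : Subgroup G} {x : G}
    (hx : x ∈ H) (hev : Even (orderOf x)) : Even (Nat.card H) := by
  rw [even_iff_two_dvd] at hev ⊢
  exact hev.trans (H.orderOf_dvd_natCard hx)

private lemma toDihedral {G : Type*} [Group G] [Finite G] {g s : G} (hg1 : g ≠ 1)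
    (hgodd : Odd (orderOf g)) (hs : orderOf s = 2) (hc : s * g * s⁻¹ = g⁻¹)
    (htop : Subgroup.closure {g, s} = ⊤) :
    Nonempty (G ≃* DihedralGroup (orderOf g)) := by
  set n := orderOf g with hn
  haveI : NeZero n := ⟨(orderOf_pos g).ne'⟩
  have hn1 : 1 < n := by
    have h0 : 0 < n := orderOf_pos g
    have h1 : n ≠ 1 := fun h => hg1 (orderOf_eq_one_iff.mp (hn ▸ h))
    omega
  haveI : Fact (1 < n) := ⟨hn1⟩
  have hss : s * s = 1 := by
    have := pow_orderOf_eq_one s; rwa [hs, sq] at this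
  set f : ZMod n → G := fun i => g ^ i.val with hf
  have hfadd : ∀ i j : ZMod n, f (i + j) = f i * f j := by
    intro i j
    show g ^ (i + j).val = g ^ i.val * g ^ j.val
    have hv : (i + j).val = (i.val + j.val) % orderOf g := ZMod.val_add i j
    rw [hv, pow_mod_orderOf, pow_add]
  have hconjf : ∀ i : ZMod n, s * f i * s⁻¹ = (f i)⁻¹ := by
    intro i
    show s * g ^ i.val * s⁻¹ = (g ^ i.val)⁻¹
    rw [← conj_pow, hc, inv_pow]
  have hsf : ∀ i : ZMod n, s * f i = (f i)⁻¹ * s := by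
    intro i
    calc s * f i = (s * f i * s⁻¹) * s := by group
      _ = (f i)⁻¹ * s := by rw [hconjf]
  have hsf' : ∀ i : ZMod n, s * (f i)⁻¹ = f i * s := by
    intro i
    have h2 : s * (f i)⁻¹ * s⁻¹ = f i := by
      rw [show s * (f i)⁻¹ * s⁻¹ = (s * f i * s⁻¹)⁻¹ by group, hconjf, inv_inv]
    calc s * (f i)⁻¹ = (s * (f i)⁻¹ * s⁻¹) * s := by group
      _ = f i * s := by rw [h2]
  have hfcomm : ∀ i j : ZMod n, Commute (f i) (f j) := fun i j =>
    (Commute.refl g).pow_pow _ _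
  have hsub : ∀ i j : ZMod n, f (j - i) = (f i)⁻¹ * f j := by
    intro i j
    have h1 : f (j - i) * f i = f j := by
      rw [← hfadd]; congr 1; ring
    have h2 : f (j - i) = f j * (f i)⁻¹ := by rw [← h1]; group
    rw [h2, (hfcomm j i).inv_right.eq]
  have hf0 : f 0 = 1 := by
    show g ^ (0 : ZMod n).val = 1
    rw [ZMod.val_zero, pow_zero]
  let φfun : DihedralGroup n → G := fun x =>
    match x with
    | DihedralGroup.r i => f i
    | DihedralGroup.sr i => s * f i
  let φ : DihedralGroup n →* G :=
    { toFun := φfun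
      map_one' := by
        show φfun (DihedralGroup.r 0) = 1
        exact hf0
      map_mul' := by
        rintro (i | i) (j | j) <;>
          simp only [DihedralGroup.r_mul_r, DihedralGroup.r_mul_sr,
            DihedralGroup.sr_mul_r, DihedralGroup.sr_mul_sr, φfun]
        · exact hfadd i j
        · calc s * f (j - i) = s * ((f i)⁻¹ * f j) := by rw [hsub]
            _ = (s * (f i)⁻¹) * f j := by group
            _ = (f i * s) * f j := by rw [hsf']
            _ = f i * (s * f j) := by group
        · rw [mul_assoc, ← hfadd]
        · refine Eq.symm ?_
          calc s * f i * (s * f j) = ((f i)⁻¹ * s) * (s * f j) := by rw [hsf i]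
            _ = (f i)⁻¹ * (s * s) * f j := by group
            _ = (f i)⁻¹ * f j := by rw [hss]; group
            _ = f (j - i) := (hsub i j).symm }
  have hφsurj : Function.Surjective φ := by
    rw [← MonoidHom.range_eq_top, eq_top_iff, ← htop, Subgroup.closure_le]
    intro x hx
    rcases hx with h | h
    · exact ⟨DihedralGroup.r 1, by show f 1 = x; rw [h]; simp [hf, ZMod.val_one n]⟩
    · exact ⟨DihedralGroup.sr 0, by show s * f 0 = x; rw [h, hf0, mul_one]⟩
  have hcard : Nat.card (DihedralGroup n) = Nat.card G := by
    rw [DihedralGroup.nat_card]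
    have h2n : 2 * n ∣ Nat.card G := by
      have hcop : Nat.Coprime 2 n := Nat.coprime_two_left.mpr hgodd
      exact hcop.mul_dvd_of_dvd_of_dvd
        (hs ▸ orderOf_dvd_natCard s) (orderOf_dvd_natCard g)
    have hle : Nat.card G ≤ 2 * n := by
      have := Nat.card_le_card_of_surjective φ hφsurj
      rwa [DihedralGroup.nat_card] at this
    exact le_antisymm (Nat.le_of_dvd (by have := Nat.card_pos (α := G); omega) h2n) hle
  have hbij : Function.Bijective φ :=
    (Nat.bijective_iff_surjective_and_card φ).mpr ⟨hφsurj, hcard⟩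
  exact ⟨(MulEquiv.ofBijective φ hbij).symm⟩

theorem stmt_19 {G : Type*} [Group G] [Finite G] (hG : 2 < Nat.card G)
    (hreal : ∀ g : G, Odd (orderOf g) → ∃ t : G, t * g * t⁻¹ = g⁻¹)
    (hndih : ∀ n : ℕ, Odd n → IsEmpty (G ≃* DihedralGroup n)) :
    ∀ g : G, Odd (orderOf g) →
      ∃ H : Subgroup G, H ≠ ⊤ ∧ Even (Nat.card H) ∧ g ∈ H := by
  have hevenG : Even (Nat.card G) := by
    by_contra hodd
    rw [Nat.not_even_iff_odd] at hodd
    have hall : ∀ x : G, x = 1 := by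
      intro x
      have hx : Odd (orderOf x) := hodd.of_dvd_nat (orderOf_dvd_natCard x)
      obtain ⟨t, ht⟩ := hreal x hx
      have hto : Odd (orderOf t) := hodd.of_dvd_nat (orderOf_dvd_natCard t)
      exact real_odd_odd ht hx hto
    haveI : Subsingleton G := ⟨fun a b => by rw [hall a, hall b]⟩
    have : Nat.card G = 1 := Nat.card_unique
    omega
  intro g hg
  by_cases hg1 : g = 1
  · haveI : Fact (Nat.Prime 2) := ⟨Nat.prime_two⟩
    obtain ⟨x, hx⟩ := exists_prime_orderOf_dvd_card' 2 (even_iff_two_dvd.mp hevenG)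
    refine ⟨Subgroup.zpowers x, ?_, ?_, ?_⟩
    · intro htop
      have : Nat.card (Subgroup.zpowers x) = Nat.card G := by
        rw [htop, Subgroup.card_top]
      rw [Nat.card_zpowers, hx] at this
      omega
    · rw [Nat.card_zpowers, hx]; exact even_two
    · rw [hg1]; exact one_mem _
  · obtain ⟨t, ht⟩ := hreal g hg
    have hteven : Even (orderOf t) := by
      rcases Nat.even_or_odd (orderOf t) with h | h
      · exact h
      · exact absurd (real_odd_odd ht hg h) hg1
    by_cases h4 : 4 ∣ orderOf t
    · refine ⟨Subgroup.centralizer {g}, ?_, ?_, ?_⟩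
      · intro htop
        have hmem : t ∈ Subgroup.centralizer {g} := htop ▸ Subgroup.mem_top t
        rw [Subgroup.mem_centralizer_iff] at hmem
        have hcomm : g * t = t * g := hmem g rfl
        have hgi : g⁻¹ = g := by
          rw [← ht]
          calc t * g * t⁻¹ = (g * t) * t⁻¹ := by rw [← hcomm]
            _ = g := by group
        exact hg1 (order_one_of_odd_sq hg (mul_eq_one_iff_eq_inv.mpr hgi.symm))
      · refine even_card_of_mem (x := t * t) ?_ ?_
        · exact Subgroup.mem_centralizer_iff.mpr (by rintro y rfl; exact (sq_commute ht).symm.eq)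
        · have horder : orderOf (t * t) = orderOf t / 2 := by
            rw [← sq, orderOf_pow, Nat.gcd_eq_right (even_iff_two_dvd.mp hteven)]
          rw [horder]
          obtain ⟨q, hq⟩ := h4
          rw [hq]
          exact ⟨q, by omega⟩
      · exact Subgroup.mem_centralizer_iff.mpr (by rintro y rfl; rfl)
    · set m := orderOf t / 2 with hm
      have htne : orderOf t ≠ 0 := (orderOf_pos t).ne'
      have ht2m : orderOf t = 2 * m := by
        obtain ⟨k, hk⟩ := hteven; omega
      have hmodd : Odd m := by
        rcases Nat.even_or_odd m with h | h
        · exfalso; apply h4; obtain ⟨k, hk⟩ := h; rw [ht2m, hk]; omega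
        · exact h
      set s := t ^ m with hsdef
      have hords : orderOf s = 2 := by
        rw [hsdef, orderOf_pow, ht2m]
        have hgcd : Nat.gcd (2 * m) m = m := Nat.gcd_eq_right ⟨2, by ring⟩
        rw [hgcd]
        have hmne : m ≠ 0 := by omega
        rw [Nat.mul_div_assoc 2 dvd_rfl, Nat.div_self (Nat.pos_of_ne_zero hmne)]
      have hconj : s * g * s⁻¹ = g⁻¹ := conj_odd_pow ht hmodd
      by_cases htop : Subgroup.closure {g, s} = ⊤
      · obtain ⟨e⟩ := toDihedral hg1 hg hords hconj htop
        exact ((hndih (orderOf g) hg).false e).elim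
      · refine ⟨Subgroup.closure {g, s}, htop, ?_, ?_⟩
        · exact even_card_of_mem
            (Subgroup.subset_closure (Set.mem_insert_of_mem _ rfl))
            (by rw [hords]; exact even_two)
        · exact Subgroup.subset_closure (Set.mem_insert _ _)
end
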